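/- Let r ≥ 2 and let (P,ℒ) be an r-uniform linear system with maximum degree Δ ≤ 2. Then (r+1)·τ ≤ |P| + |ℒ| (equivalently, τ ≤ (|P| + |ℒ|)/(r+1)), where τ is the transversal number. -/

import Mathlib

open Finset

/-- `(P, L)` is a linear system: lines are nonempty subsets of the point set `P`,
and any two distinct lines share at most one point. -/
def IsLinearSystem {α : Type*} [DecidableEq α] (P : Finset α) (L : Finset (Finset α)) : Prop :=
  (∀ l ∈ L, l.Nonempty) ∧ (∀ l ∈ L, l ⊆ P) ∧
    ∀ l ∈ L, ∀ l' ∈ L, l ≠ l' → (l ∩ l').card ≤ 1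

/-- `T` is a transversal of the linear system `(P, L)`. -/
def IsTransversal {α : Type*} [DecidableEq α] (P : Finset α) (L : Finset (Finset α))
    (T : Finset α) : Prop :=
  T ⊆ P ∧ ∀ l ∈ L, (T ∩ l).Nonempty

/-- The transversal number `τ` of `(P, L)`. -/
noncomputable def tau {α : Type*} [DecidableEq α] (P : Finset α) (L : Finset (Finset α)) : ℕ :=
  sInf {n | ∃ T : Finset α, IsTransversal P L T ∧ T.card = n}

/-- `R` is a 2-packing of `L`: no three distinct lines of `R` have a common point. -/
def Is2Packing {α : Type*} [DecidableEq α] (L R : Finset (Finset α)) : Prop :=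
  R ⊆ L ∧ ∀ l₁ ∈ R, ∀ l₂ ∈ R, ∀ l₃ ∈ R,
    l₁ ≠ l₂ → l₁ ≠ l₃ → l₂ ≠ l₃ → l₁ ∩ l₂ ∩ l₃ = ∅

/-- The 2-packing number `ν₂` of `(P, L)`. -/
noncomputable def nu2 {α : Type*} [DecidableEq α] (L : Finset (Finset α)) : ℕ :=
  sSup {n | ∃ R : Finset (Finset α), Is2Packing L R ∧ R.card = n}

/-- The degree of a point `p`: the number of lines containing `p`. -/
def degree {α : Type*} [DecidableEq α] (L : Finset (Finset α)) (p : α) : ℕ :=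
  (L.filter fun l => p ∈ l).card

/-- The maximum degree `Δ` over all points of `P`. -/
def maxDegree {α : Type*} [DecidableEq α] (P : Finset α) (L : Finset (Finset α)) : ℕ :=
  P.sup (degree L)

/-!
Points of degree 2 are the edges of a simple graph `G` on the lines, of maximum degree at most
`r`. A maximum matching of `G` yields a transversal with `|ℒ| - ν(G)` points (one point per
matching edge covers two lines, one further point for each remaining line), and double counting
incidences gives `r |ℒ| ≤ |P| + |E(G)|`. So it suffices that a graph of maximum degree `d` has at
most `(d + 1) ν` edges. In a minimal counterexample every vertex is missed by some maximum
matching and the graph is connected, so by Gallai's lemma a maximum matching misses at most one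
vertex; then `|E| ≤ min (d (2ν + 1) / 2) ((2ν + 1) ν) ≤ (d + 1) ν`.

Graphs are encoded by their edge sets, families of 2-element finsets.
-/

section Matching

variable {β : Type*} {E F G M N : Finset (Finset β)} {e e' : Finset β} {v : β}

def IsMatching (M : Finset (Finset β)) : Prop := (M : Set (Finset β)).PairwiseDisjoint id

noncomputable def matchingNumber (E : Finset (Finset β)) : ℕ :=
  sSup {n | ∃ M ⊆ E, IsMatching M ∧ #M = n}

structure IsMaxMatching (E M : Finset (Finset β)) : Prop where
  subset : M ⊆ E
  isMatching : IsMatching M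
  card_eq : #M = matchingNumber E

lemma IsMatching.subset (hM : IsMatching M) (h : N ⊆ M) : IsMatching N :=
  Set.PairwiseDisjoint.subset hM (coe_subset.2 h)

lemma IsMatching.eq_of_mem_of_mem {f : Finset β} {x : β} (hM : IsMatching M) (he : e ∈ M)
    (hf : f ∈ M) (hxe : x ∈ e) (hxf : x ∈ f) : e = f := by
  by_contra h
  exact disjoint_left.1 (hM he hf h) hxe hxf

lemma bddAbove_matchingSizes (E : Finset (Finset β)) :
    BddAbove {n | ∃ M ⊆ E, IsMatching M ∧ #M = n} :=
  ⟨#E, by rintro _ ⟨M, hME, -, rfl⟩; exact card_le_card hME⟩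

lemma IsMatching.card_le_matchingNumber (hM : IsMatching M) (hME : M ⊆ E) :
    #M ≤ matchingNumber E :=
  le_csSup (bddAbove_matchingSizes E) ⟨M, hME, hM, rfl⟩

lemma exists_isMaxMatching (E : Finset (Finset β)) : ∃ M, IsMaxMatching E M := by
  have hne : {n | ∃ M ⊆ E, IsMatching M ∧ #M = n}.Nonempty :=
    ⟨0, ∅, empty_subset E, by simp [IsMatching], rfl⟩
  obtain ⟨M, hME, hM, hcard⟩ := Nat.sSup_mem hne (bddAbove_matchingSizes E)
  exact ⟨M, hME, hM, hcard⟩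

lemma matchingNumber_mono (h : F ⊆ E) : matchingNumber F ≤ matchingNumber E := by
  obtain ⟨M, hM⟩ := exists_isMaxMatching F
  exact hM.card_eq ▸ hM.isMatching.card_le_matchingNumber (hM.subset.trans h)

variable [DecidableEq β]

def vertices (E : Finset (Finset β)) : Finset β := E.biUnion id

@[simp]
lemma mem_vertices : v ∈ vertices E ↔ ∃ e ∈ E, v ∈ e := by simp [vertices]

lemma degree_mono (h : F ⊆ E) (v : β) : degree F v ≤ degree E v :=
  card_le_card (filter_subset_filter _ h)

lemma IsMatching.card_vertices (hM : IsMatching M) (hM2 : ∀ e ∈ M, #e = 2) :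
    #(vertices M) = 2 * #M := by
  rw [vertices, card_biUnion hM]
  exact (sum_congr rfl hM2).trans (by rw [sum_const, smul_eq_mul, mul_comm])

lemma matchingNumber_add_le_of_disjoint (hFG : Disjoint F G)
    (hdisj : ∀ e ∈ F, ∀ f ∈ G, Disjoint e f) :
    matchingNumber F + matchingNumber G ≤ matchingNumber (F ∪ G) := by
  obtain ⟨MF, hMF⟩ := exists_isMaxMatching F
  obtain ⟨MG, hMG⟩ := exists_isMaxMatching G
  have hunion : IsMatching (MF ∪ MG) := by
    rw [IsMatching, coe_union]
    exact hMF.isMatching.union hMG.isMatching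
      fun e he f hf _ => hdisj e (hMF.subset he) f (hMG.subset hf)
  have hcard := hunion.card_le_matchingNumber (union_subset_union hMF.subset hMG.subset)
  rwa [card_union_of_disjoint (hFG.mono hMF.subset hMG.subset), hMF.card_eq, hMG.card_eq] at hcard

lemma IsMatching.insert_of_disjoint (hM : IsMatching M) (h : ∀ f ∈ M, e ≠ f → Disjoint e f) :
    IsMatching (insert e M) := by
  rw [IsMatching, coe_insert]
  exact Set.PairwiseDisjoint.insert hM h

lemma IsMaxMatching.swap (hM : IsMaxMatching E M) (he : e ∈ E) (heM : e ∉ M) (he' : e' ∈ M)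
    (hdisj : ∀ f ∈ M, f ≠ e' → Disjoint e f) : IsMaxMatching E (insert e (M.erase e')) := by
  refine ⟨insert_subset he ((erase_subset _ _).trans hM.subset), ?_, ?_⟩
  · exact (hM.isMatching.subset (erase_subset _ _)).insert_of_disjoint
      fun f hf _ => hdisj f (mem_of_mem_erase hf) (ne_of_mem_erase hf)
  · rw [card_insert_of_notMem (fun h => heM (mem_of_mem_erase h)), card_erase_add_one he',
      hM.card_eq]

lemma IsMatching.vertices_insert_erase_subset (hM : IsMatching M) (he' : e' ∈ M) :
    vertices (insert e (M.erase e')) ⊆ e ∪ (vertices M \ e') := by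
  intro x hx
  obtain ⟨f, hf, hxf⟩ := mem_vertices.1 hx
  obtain rfl | ⟨hfe', hfM⟩ := mem_insert.1 hf |>.imp_right mem_erase.1
  · exact mem_union_left _ hxf
  · exact mem_union_right _ <| mem_sdiff.2
      ⟨mem_vertices.2 ⟨f, hfM, hxf⟩, disjoint_left.1 (hM hfM he' hfe') hxf⟩

end Matching

section

variable {γ : Type*} [DecidableEq γ]

lemma card_sdiff_le_card_sdiff_insert_erase (s t : Finset γ) (x y : γ) :
    #(s \ t) ≤ #(s \ insert x (t.erase y)) + 1 := by
  refine (card_le_card fun f hf => ?_).trans (card_insert_le x _)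
  rw [mem_sdiff] at hf
  by_cases hfx : f = x
  · exact hfx ▸ mem_insert_self f _
  · exact mem_insert_of_mem <| mem_sdiff.2
      ⟨hf.1, fun h => hf.2 <| mem_of_mem_erase <| (mem_insert.1 h).resolve_left hfx⟩

lemma card_sdiff_insert_erase_lt {s t : Finset γ} {x y : γ} (hxs : x ∈ s) (hxt : x ∉ t)
    (hys : y ∉ s) : #(s \ insert x (t.erase y)) < #(s \ t) := by
  refine lt_of_le_of_lt (card_le_card fun f hf => ?_) (card_erase_lt_of_mem (a := x) ?_)
  · obtain ⟨hfs, hf⟩ := mem_sdiff.1 hf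
    rw [mem_insert, mem_erase, not_or, not_and] at hf
    exact mem_erase.2 ⟨hf.1, mem_sdiff.2 ⟨hfs, fun hft => hf.2 (fun h => hys (h ▸ hfs)) hft⟩⟩
  · exact mem_sdiff.2 ⟨hxs, hxt⟩

lemma exists_eq_pair_of_mem {e : Finset γ} {a : γ} (h2 : #e = 2) (ha : a ∈ e) :
    ∃ b, b ≠ a ∧ e = {a, b} := by
  obtain ⟨b, hb⟩ := card_eq_one.1 (by rw [card_erase_of_mem ha, h2] : #(e.erase a) = 1)
  refine ⟨b, ne_of_mem_erase (hb ▸ mem_singleton_self b), ?_⟩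
  rw [← insert_erase ha, hb]

lemma sum_degree_eq_sum_card {P : Finset γ} {L : Finset (Finset γ)} (hL : ∀ l ∈ L, l ⊆ P) :
    ∑ p ∈ P, degree L p = ∑ l ∈ L, #l := by
  refine (sum_card_bipartiteAbove_eq_sum_card_bipartiteBelow (r := fun p l => p ∈ l)).trans
    (sum_congr rfl fun l hl => ?_)
  rw [bipartiteBelow, filter_mem_eq_inter, inter_eq_right.2 (hL l hl)]

end

section Graph

variable {β : Type*} {E M N : Finset (Finset β)} {e : Finset β} {a u v w : β} {d k : ℕ}

def adjGraph (E : Finset (Finset β)) : SimpleGraph β where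
  Adj x y := x ≠ y ∧ ∃ e ∈ E, x ∈ e ∧ y ∈ e
  symm := ⟨fun _ _ ⟨hne, e, he, hx, hy⟩ => ⟨hne.symm, e, he, hy, hx⟩⟩
  loopless := ⟨fun _ h => h.1 rfl⟩

lemma adjGraph_adj : (adjGraph E).Adj u v ↔ u ≠ v ∧ ∃ e ∈ E, u ∈ e ∧ v ∈ e := Iff.rfl

lemma adjGraph_reachable_of_mem (he : e ∈ E) (hu : u ∈ e) (hv : v ∈ e) :
    (adjGraph E).Reachable u v := by
  by_cases huv : u = v
  · exact huv ▸ SimpleGraph.Reachable.refl u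
  · exact SimpleGraph.Adj.reachable (adjGraph_adj.2 ⟨huv, e, he, hu, hv⟩)

variable [DecidableEq β]

lemma IsMaxMatching.mem_vertices_or_mem_vertices (hM : IsMaxMatching E M)
    (hE2 : ∀ e ∈ E, #e = 2) (h : (adjGraph E).Adj u v) : u ∈ vertices M ∨ v ∈ vertices M := by
  obtain ⟨huv, e, he, hu, hv⟩ := adjGraph_adj.1 h
  by_contra! hmiss
  have heuv : e = {u, v} := by
    obtain ⟨b, -, rfl⟩ := exists_eq_pair_of_mem (hE2 e he) hu
    rw [(mem_insert.1 hv).resolve_left huv.symm |> mem_singleton.1]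
  have hdisj : ∀ f ∈ M, Disjoint e f := fun f hf => by
    rw [heuv, disjoint_insert_left, disjoint_singleton_left]
    exact ⟨fun h => hmiss.1 (mem_vertices.2 ⟨f, hf, h⟩),
      fun h => hmiss.2 (mem_vertices.2 ⟨f, hf, h⟩)⟩
  have heM : e ∉ M := fun h => hmiss.1 (mem_vertices.2 ⟨e, h, hu⟩)
  have hcard := (hM.isMatching.insert_of_disjoint fun f hf _ => hdisj f hf).card_le_matchingNumber
    (insert_subset he hM.subset)
  rw [card_insert_of_notMem heM, hM.card_eq] at hcard
  omega

lemma IsMaxMatching.exists_rotate (hM : IsMaxMatching E M) (hE2 : ∀ e ∈ E, #e = 2)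
    (hu : u ∉ vertices M) (hua : {u, a} ∈ E) (hne : u ≠ a) :
    ∃ b, b ≠ a ∧ {a, b} ∈ M ∧ b ≠ u ∧ IsMaxMatching E (insert {u, a} (M.erase {a, b})) ∧
      vertices (insert {u, a} (M.erase {a, b})) ⊆ insert u ((vertices M).erase b) := by
  have ha : a ∈ vertices M := (hM.mem_vertices_or_mem_vertices hE2
    (adjGraph_adj.2 ⟨hne, _, hua, by simp, by simp⟩)).resolve_left hu
  obtain ⟨e, heM, hae⟩ := mem_vertices.1 ha
  obtain ⟨b, hba, rfl⟩ := exists_eq_pair_of_mem (hE2 e (hM.subset heM)) hae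
  have hbu : b ≠ u := fun h => hu (mem_vertices.2 ⟨_, heM, by simp [h]⟩)
  refine ⟨b, hba, heM, hbu, hM.swap hua (fun h => hu (mem_vertices.2 ⟨_, h, by simp⟩)) heM ?_, ?_⟩
  · intro f hf hfe
    rw [disjoint_insert_left, disjoint_singleton_left]
    exact ⟨fun h => hu (mem_vertices.2 ⟨f, hf, h⟩),
      fun h => disjoint_left.1 (hM.isMatching hf heM hfe) h (by simp)⟩
  · intro x hx
    rcases mem_union.1 (hM.isMatching.vertices_insert_erase_subset heM hx) with hx | hx
    · rcases mem_insert.1 hx with rfl | hx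
      · exact mem_insert_self x _
      · rw [mem_singleton.1 hx]
        exact mem_insert_of_mem (mem_erase.2 ⟨hba.symm, ha⟩)
    · rw [mem_sdiff, mem_insert, mem_singleton, not_or] at hx
      exact mem_insert_of_mem (mem_erase.2 ⟨hx.2.2, hx.1⟩)

/- Follow the alternating path `u, a, b, …` that starts with the `N`-edge at `u`, rotating `M`
along it. It can only end at `w`: at a vertex `b ≠ w` missed by `N`, rotating `N` instead would
give a maximum matching missing `w` that is closer to `M`. -/
lemma exists_isMaxMatching_of_closest (hE2 : ∀ e ∈ E, #e = 2) (hN : IsMaxMatching E N)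
    (hNw : w ∉ vertices N) (hM : IsMaxMatching E M)
    (hmin : ∀ N', IsMaxMatching E N' → w ∉ vertices N' → #(N \ M) ≤ #(N' \ M))
    (hu : u ∉ vertices M) (huN : u ∈ vertices N) :
    ∃ M', IsMaxMatching E M' ∧ w ∉ vertices M' ∧ ∀ x ∉ vertices M, x ≠ u → x ∉ vertices M' := by
  induction hn : #(N \ M) using Nat.strong_induction_on generalizing M u with
  | _ n ih =>
  obtain ⟨e, he, hue⟩ := mem_vertices.1 huN
  obtain ⟨a, hau, rfl⟩ := exists_eq_pair_of_mem (hE2 _ (hN.subset he)) hue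
  obtain ⟨b, hba, hab, hbu, hMt, hMtV⟩ := hM.exists_rotate hE2 hu (hN.subset he) hau.symm
  set Mt := insert {u, a} (M.erase {a, b})
  have hmissed : ∀ x ∉ vertices M, x ≠ u → x ∉ vertices Mt := fun x hx hxu h =>
    (mem_insert.1 (hMtV h)).elim hxu fun h => hx (mem_of_mem_erase h)
  have hbMt : b ∉ vertices Mt := fun h =>
    (mem_insert.1 (hMtV h)).elim hbu fun h => ne_of_mem_erase h rfl
  by_cases hbw : b = w
  · exact ⟨Mt, hMt, hbw ▸ hbMt, hmissed⟩
  by_cases hbN : b ∈ vertices N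
  · have heM : {u, a} ∉ M := fun h => hu (mem_vertices.2 ⟨_, h, mem_insert_self u _⟩)
    have habN : {a, b} ∉ N := fun h => by
      have hu' : u ∈ ({a, b} : Finset β) :=
        hN.isMatching.eq_of_mem_of_mem h he (mem_insert_self a _) (by simp) ▸ mem_insert_self u _
      rcases mem_insert.1 hu' with h | h
      · exact hau h.symm
      · exact hbu (mem_singleton.1 h).symm
    have hcloser : #(N \ Mt) < #(N \ M) := card_sdiff_insert_erase_lt he heM habN
    obtain ⟨M', hM', hM'w, hM'missed⟩ := ih _ (hn ▸ hcloser) hMt (fun N' hN' hN'w => by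
        have := hmin N' hN' hN'w
        have : #(N' \ M) ≤ #(N' \ Mt) + 1 := card_sdiff_le_card_sdiff_insert_erase _ _ _ _
        omega) hbMt hbN rfl
    refine ⟨M', hM', hM'w, fun x hx hxu => hM'missed x (hmissed x hx hxu) ?_⟩
    rintro rfl
    exact hx (mem_vertices.2 ⟨_, hab, mem_insert_of_mem (mem_singleton_self x)⟩)
  -- otherwise rotating `N` at `a` gives a maximum matching missing `w` that is closer to `M`
  exfalso
  have hba' : {b, a} ∈ M := pair_comm a b ▸ hab
  obtain ⟨c, -, hac, -, hN', hN'V⟩ := hN.exists_rotate hE2 hbN (hM.subset hba') hba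
  have hN'w : w ∉ vertices (insert {b, a} (N.erase {a, c})) := fun h =>
    (mem_insert.1 (hN'V h)).elim (fun h => hbw h.symm) fun h => hNw (mem_of_mem_erase h)
  have hacM : {a, c} ∉ M := fun h => hbN <| mem_vertices.2 ⟨_, hac, by
    rw [hM.isMatching.eq_of_mem_of_mem h hab (mem_insert_self a _) (mem_insert_self a _)]
    exact mem_insert_of_mem (mem_singleton_self b)⟩
  have hbaN : {b, a} ∉ N := fun h => hbN (mem_vertices.2 ⟨_, h, mem_insert_self b _⟩)
  have hcloser := card_sdiff_insert_erase_lt hba' hbaN hacM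
  rw [card_sdiff_comm (hM.card_eq.trans hN'.card_eq.symm),
    card_sdiff_comm (hM.card_eq.trans hN.card_eq.symm)] at hcloser
  exact (hmin _ hN' hN'w).not_gt hcloser

/- Gallai's lemma, after Lovász: if `u w … v` is a shortest walk, a maximum matching missing `w`
and closest to `M` covers `u`, and the exchange above yields a maximum matching missing the
closer pair `w`, `v`. -/
lemma not_reachable_of_forall_exists_missing (hE2 : ∀ e ∈ E, #e = 2)
    (hmiss : ∀ v, ∃ N, IsMaxMatching E N ∧ v ∉ vertices N) (hM : IsMaxMatching E M)
    (huv : u ≠ v) (hu : u ∉ vertices M) (hv : v ∉ vertices M) :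
    ¬ (adjGraph E).Reachable u v := by
  rintro ⟨p⟩
  induction hn : p.length using Nat.strong_induction_on generalizing M u with
  | _ n ih =>
  cases p with
  | nil => exact huv rfl
  | @cons _ w _ hadj q =>
    have hwM : w ∈ vertices M := (hM.mem_vertices_or_mem_vertices hE2 hadj).resolve_left hu
    have hwv : w ≠ v := fun h => hv (h ▸ hwM)
    obtain ⟨N, ⟨hN, hNw⟩, hNmin⟩ := Set.exists_min_image
      {N | IsMaxMatching E N ∧ w ∉ vertices N} (fun N => #(N \ M))
      (E.powerset.finite_toSet.subset fun N hN => mem_coe.2 (mem_powerset.2 hN.1.subset))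
      (hmiss w)
    have huN : u ∈ vertices N := (hN.mem_vertices_or_mem_vertices hE2 hadj).resolve_right hNw
    obtain ⟨M', hM', hM'w, hM'missed⟩ := exists_isMaxMatching_of_closest hE2 hN hNw hM
      (fun N' hN' hN'w => hNmin N' ⟨hN', hN'w⟩) hu huN
    exact ih q.length (by simp [← hn]) hM' hwv hM'w (hM'missed v hv huv.symm) q rfl

lemma card_le_of_card_vertices_le (hE2 : ∀ e ∈ E, #e = 2) (hdeg : ∀ v, degree E v ≤ d)
    (hV : #(vertices E) ≤ 2 * k + 1) : #E ≤ (d + 1) * k := by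
  have hsub : ∀ e ∈ E, e ⊆ vertices E := fun e he x hx => mem_vertices.2 ⟨e, he, hx⟩
  have hdegrees : 2 * #E ≤ d * (2 * k + 1) := calc
    2 * #E = ∑ v ∈ vertices E, degree E v := by
      rw [sum_degree_eq_sum_card hsub, sum_congr rfl hE2, sum_const, smul_eq_mul, mul_comm]
    _ ≤ ∑ _v ∈ vertices E, d := sum_le_sum fun v _ => hdeg v
    _ ≤ d * (2 * k + 1) := by
      rw [sum_const, smul_eq_mul, mul_comm]
      exact Nat.mul_le_mul_left d hV
  have hpairs : #E ≤ (2 * k + 1) * k := calc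
    #E ≤ #((vertices E).powersetCard 2) :=
      card_le_card fun e he => mem_powersetCard.2 ⟨hsub e he, hE2 e he⟩
    _ ≤ (2 * k + 1).choose 2 := by
      rw [card_powersetCard]
      exact Nat.choose_le_choose 2 hV
    _ = (2 * k + 1) * k := by
      rw [Nat.choose_two_right, Nat.add_sub_cancel, mul_left_comm,
        Nat.mul_div_cancel_left _ two_pos]
  -- the first bound settles `d ≤ 2k`, the second one `d > 2k`
  rcases le_or_gt d (2 * k) with h | h <;> nlinarith

lemma exists_isMaxMatching_not_mem_vertices (hdeg : ∀ v, degree E v ≤ d)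
    (hmin : ∀ F ⊂ E, #F ≤ (d + 1) * matchingNumber F)
    (hE : (d + 1) * matchingNumber E < #E) (v : β) :
    ∃ M, IsMaxMatching E M ∧ v ∉ vertices M := by
  set F := E.filter (v ∉ ·)
  have hsplit : degree E v + #F = #E := card_filter_add_card_filter_not _
  have hνF : matchingNumber F = matchingNumber E := by
    refine (matchingNumber_mono (filter_subset _ _)).antisymm (not_lt.1 fun hlt => ?_)
    have hFE : F ⊂ E := (filter_subset _ _).ssubset_of_ne fun h => hlt.ne (by rw [h])
    have := hmin F hFE
    have := hdeg v
    have := Nat.mul_le_mul_left (d + 1) (Nat.succ_le_of_lt hlt)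
    nlinarith
  obtain ⟨M, hM⟩ := exists_isMaxMatching F
  refine ⟨M, ⟨hM.subset.trans (filter_subset _ _), hM.isMatching, hM.card_eq.trans hνF⟩,
    fun h => ?_⟩
  obtain ⟨e, he, hve⟩ := mem_vertices.1 h
  exact (mem_filter.1 (hM.subset he)).2 hve

lemma reachable_of_mem_vertices (hmin : ∀ F ⊂ E, #F ≤ (d + 1) * matchingNumber F)
    (hE : (d + 1) * matchingNumber E < #E) (hu : u ∈ vertices E) (hv : v ∈ vertices E) :
    (adjGraph E).Reachable u v := by
  classical
  by_contra huv
  set F := E.filter fun e => ∃ x ∈ e, (adjGraph E).Reachable u x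
  have hreach : ∀ e ∈ F, ∀ y ∈ e, (adjGraph E).Reachable u y := fun e he y hy => by
    obtain ⟨he, x, hx, hux⟩ := mem_filter.1 he
    exact hux.trans (adjGraph_reachable_of_mem he hx hy)
  have hdisj : ∀ e ∈ F, ∀ f ∈ E \ F, Disjoint e f := fun e he f hf =>
    disjoint_left.2 fun y hye hyf =>
      (mem_sdiff.1 hf).2 (mem_filter.2 ⟨(mem_sdiff.1 hf).1, y, hyf, hreach e he y hye⟩)
  obtain ⟨eu, heu, hueu⟩ := mem_vertices.1 hu
  obtain ⟨ev, hev, hvev⟩ := mem_vertices.1 hv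
  have hF : F ⊂ E := filter_ssubset.2 ⟨ev, hev, fun ⟨x, hx, hux⟩ =>
    huv (hux.trans (adjGraph_reachable_of_mem hev hx hvev))⟩
  have hG : E \ F ⊂ E :=
    sdiff_ssubset (filter_subset _ _) ⟨eu, mem_filter.2 ⟨heu, u, hueu, .refl u⟩⟩
  have hν := matchingNumber_add_le_of_disjoint disjoint_sdiff hdisj
  rw [union_sdiff_of_subset (filter_subset _ _)] at hν
  have := hmin F hF
  have := hmin _ hG
  have := card_sdiff_add_card_eq_card hF.subset
  nlinarith

theorem card_le_succ_mul_matchingNumber (hE2 : ∀ e ∈ E, #e = 2) (hdeg : ∀ v, degree E v ≤ d) :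
    #E ≤ (d + 1) * matchingNumber E := by
  induction E using Finset.strongInduction with
  | H E ih =>
  by_contra! hE
  have hmin : ∀ F ⊂ E, #F ≤ (d + 1) * matchingNumber F := fun F hF =>
    ih F hF (fun e he => hE2 e (hF.subset he)) fun v => (degree_mono hF.subset v).trans (hdeg v)
  obtain ⟨M, hM⟩ := exists_isMaxMatching E
  have hmissed : #(vertices E \ vertices M) ≤ 1 := card_le_one.2 fun u hu v hv => by
    by_contra huv
    exact not_reachable_of_forall_exists_missing hE2
      (exists_isMaxMatching_not_mem_vertices hdeg hmin hE) hM huv (mem_sdiff.1 hu).2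
      (mem_sdiff.1 hv).2 (reachable_of_mem_vertices hmin hE (mem_sdiff.1 hu).1 (mem_sdiff.1 hv).1)
  refine hE.not_ge (card_le_of_card_vertices_le hE2 hdeg ?_)
  calc #(vertices E) ≤ #(vertices E \ vertices M) + #(vertices M) := card_le_card_sdiff_add_card
    _ ≤ 2 * matchingNumber E + 1 := by
      rw [hM.isMatching.card_vertices fun e he => hE2 e (hM.subset he), hM.card_eq]
      omega

end Graph

section LinearSystem

variable {α : Type*} [DecidableEq α] {P T : Finset α} {L : Finset (Finset α)} {r : ℕ}

def linesThrough (L : Finset (Finset α)) (p : α) : Finset (Finset α) := L.filter (p ∈ ·)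

@[simp]
lemma mem_linesThrough {p : α} {l : Finset α} : l ∈ linesThrough L p ↔ l ∈ L ∧ p ∈ l :=
  mem_filter

lemma linesThrough_injOn (hlin : ∀ l ∈ L, ∀ l' ∈ L, l ≠ l' → #(l ∩ l') ≤ 1) :
    Set.InjOn (linesThrough L) {p | 2 ≤ degree L p} := by
  intro p hp q _ hpq
  by_contra hne
  obtain ⟨l, hl, l', hl', hll'⟩ := one_lt_card.1 (hp : 2 ≤ #(linesThrough L p))
  have hql : l ∈ linesThrough L q := hpq ▸ hl
  have hql' : l' ∈ linesThrough L q := hpq ▸ hl'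
  rw [mem_linesThrough] at hql hql'
  rw [mem_filter] at hl hl'
  have h2 : 1 < #(l ∩ l') :=
    one_lt_card.2 ⟨p, mem_inter.2 ⟨hl.2, hl'.2⟩, q, mem_inter.2 ⟨hql.2, hql'.2⟩, hne⟩
  exact (hlin l hl.1 l' hl'.1 hll').not_gt h2

/-- The graph on the lines whose edges are the points of degree 2. -/
def dualGraph (P : Finset α) (L : Finset (Finset α)) : Finset (Finset (Finset α)) :=
  (P.filter (degree L · = 2)).image (linesThrough L)

lemma card_dualGraph (hlin : ∀ l ∈ L, ∀ l' ∈ L, l ≠ l' → #(l ∩ l') ≤ 1) :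
    #(dualGraph P L) = #(P.filter (degree L · = 2)) :=
  card_image_of_injOn ((linesThrough_injOn hlin).mono fun _ hp => (mem_filter.1 hp).2.ge)

lemma card_eq_two_of_mem_dualGraph {e : Finset (Finset α)} (he : e ∈ dualGraph P L) : #e = 2 := by
  obtain ⟨p, hp, rfl⟩ := mem_image.1 he
  exact (mem_filter.1 hp).2

lemma degree_dualGraph_le (huniform : ∀ l ∈ L, #l = r) (l : Finset α) :
    degree (dualGraph P L) l ≤ r := by
  rw [degree, dualGraph, filter_image]
  refine card_image_le.trans ?_
  by_cases hl : l ∈ L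
  · exact huniform l hl ▸ card_le_card fun p hp => (mem_linesThrough.1 (mem_filter.1 hp).2).2
  · rw [filter_eq_empty_iff.2 fun p _ h => hl (mem_linesThrough.1 h).1, card_empty]
    exact r.zero_le

lemma sum_card_le_card_add_card_filter (hsub : ∀ l ∈ L, l ⊆ P) (hΔ : maxDegree P L ≤ 2) :
    ∑ l ∈ L, #l ≤ #P + #(P.filter (degree L · = 2)) := by
  rw [← sum_degree_eq_sum_card hsub, card_filter, card_eq_sum_ones, ← sum_add_distrib]
  refine sum_le_sum fun p hp => ?_
  have : degree L p ≤ 2 := (le_sup hp).trans hΔ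
  split_ifs <;> omega

lemma tau_le_card (hT : IsTransversal P L T) : tau P L ≤ #T :=
  Nat.sInf_le ⟨T, hT, rfl⟩

lemma exists_isTransversal_card_le (hne : ∀ l ∈ L, l.Nonempty) (hsub : ∀ l ∈ L, l ⊆ P) :
    ∃ T, IsTransversal P L T ∧ #T ≤ #L := by
  induction L using Finset.induction_on with
  | empty => exact ⟨∅, ⟨empty_subset _, by simp⟩, by simp⟩
  | insert l L hl ih =>
    obtain ⟨T, ⟨hTP, hT⟩, hcard⟩ := ih (fun m hm => hne m (mem_insert_of_mem hm))
      (fun m hm => hsub m (mem_insert_of_mem hm))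
    obtain ⟨x, hx⟩ := hne l (mem_insert_self l L)
    refine ⟨insert x T, ⟨insert_subset (hsub l (mem_insert_self l L) hx) hTP, fun m hm => ?_⟩, ?_⟩
    · rcases mem_insert.1 hm with rfl | hm
      · exact ⟨x, mem_inter.2 ⟨mem_insert_self x T, hx⟩⟩
      · exact (hT m hm).mono (inter_subset_inter_right (subset_insert x T))
    · rw [card_insert_of_notMem hl]
      exact (card_insert_le x T).trans (by omega)

lemma tau_add_matchingNumber_dualGraph_le (hne : ∀ l ∈ L, l.Nonempty) (hsub : ∀ l ∈ L, l ⊆ P)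
    (hlin : ∀ l ∈ L, ∀ l' ∈ L, l ≠ l' → #(l ∩ l') ≤ 1) :
    tau P L + matchingNumber (dualGraph P L) ≤ #L := by
  obtain ⟨M, hM⟩ := exists_isMaxMatching (dualGraph P L)
  set S := (P.filter (degree L · = 2)).filter (linesThrough L · ∈ M)
  have hSM : S.image (linesThrough L) = M := by
    ext e
    refine ⟨fun he => ?_, fun he => ?_⟩
    · obtain ⟨p, hp, rfl⟩ := mem_image.1 he
      exact (mem_filter.1 hp).2
    · obtain ⟨p, hp, rfl⟩ := mem_image.1 (hM.subset he)
      exact mem_image.2 ⟨p, mem_filter.2 ⟨hp, he⟩, rfl⟩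
  have hScard : #S = #M := hSM ▸ (card_image_of_injOn <| (linesThrough_injOn hlin).mono
    fun _ hp => (mem_filter.1 (mem_filter.1 hp).1).2.ge).symm
  have hML : vertices M ⊆ L := fun l hl => by
    obtain ⟨e, he, hle⟩ := mem_vertices.1 hl
    obtain ⟨p, -, rfl⟩ := mem_image.1 (hM.subset he)
    exact (mem_linesThrough.1 hle).1
  obtain ⟨T, ⟨hTP, hT⟩, hTcard⟩ := exists_isTransversal_card_le (L := L \ vertices M)
    (fun l hl => hne l (mem_sdiff.1 hl).1) (fun l hl => hsub l (mem_sdiff.1 hl).1)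
  have hST : IsTransversal P L (S ∪ T) := by
    refine ⟨union_subset (fun p hp => (mem_filter.1 (mem_filter.1 hp).1).1) hTP, fun l hl => ?_⟩
    by_cases hlM : l ∈ vertices M
    · obtain ⟨e, he, hle⟩ := mem_vertices.1 hlM
      rw [← hSM] at he
      obtain ⟨p, hp, rfl⟩ := mem_image.1 he
      exact ⟨p, mem_inter.2 ⟨mem_union_left T hp, (mem_linesThrough.1 hle).2⟩⟩
    · exact (hT l (mem_sdiff.2 ⟨hl, hlM⟩)).mono (inter_subset_inter_right subset_union_right)
  have hVM := hM.isMatching.card_vertices fun e he => card_eq_two_of_mem_dualGraph (hM.subset he)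
  have := card_sdiff_add_card_eq_card hML
  have := card_union_le S T
  have := tau_le_card hST
  rw [← hM.card_eq]
  omega

end LinearSystem

theorem stmt17_general {α : Type*} [DecidableEq α] (P : Finset α) (L : Finset (Finset α))
    (r : ℕ) (hLS : IsLinearSystem P L)
    (huniform : ∀ l ∈ L, l.card = r) (hΔ : maxDegree P L ≤ 2) :
    (r + 1) * tau P L ≤ P.card + L.card := by
  obtain ⟨hne, hsub, hlin⟩ := hLS
  have htau := tau_add_matchingNumber_dualGraph_le hne hsub hlin
  have hgraph := card_le_succ_mul_matchingNumber (fun _ he => card_eq_two_of_mem_dualGraph he)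
    (degree_dualGraph_le (P := P) huniform)
  have hcount : r * #L ≤ #P + #(dualGraph P L) := by
    rw [card_dualGraph hlin, mul_comm, ← sum_const_nat huniform]
    exact sum_card_le_card_add_card_filter hsub hΔ
  nlinarith

/-- Any `r`-uniform linear system (`r ≥ 2`) with `Δ ≤ 2` satisfies
`(r+1)·τ ≤ |P| + |ℒ|`. -/
theorem stmt17 {α : Type*} [DecidableEq α] (P : Finset α) (L : Finset (Finset α))
    (r : ℕ) (hr : 2 ≤ r) (hLS : IsLinearSystem P L)
    (huniform : ∀ l ∈ L, l.card = r) (hΔ : maxDegree P L ≤ 2) :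
    (r + 1) * tau P L ≤ P.card + L.card :=
  stmt17_general P L r hLS huniform hΔ
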